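/- The system of polynomial equations x·x' = 1, y·y' = 1, y·x²·y' = x³, z·(y·x·y'·x'·y·x'·y'·x − 1) = 1 in noncommuting variables x, x', y, y', z has no solution in the matrix ring M_c(F) for any field F and any c ≥ 1. -/

import Mathlib

/-!
The entries of a solution generate a finitely generated `ℤ`-subalgebra `R` of `F`, over which the
system still has a solution, and reducing modulo a maximal ideal `m` gives a solution in matrices
over `R ⧸ m`, a finite field because `ℤ` is a Jacobson ring. In the finite group of units there,
`y x² y⁻¹ = x³` forces `x` to have odd order, so `x` is a power of `x²` and `y x y⁻¹` is a power of
`x³`. Hence `y x y⁻¹` commutes with `x`, the word `y x y⁻¹ x⁻¹ · y x⁻¹ y⁻¹ · x` is `1`, and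
`z * 0 = 1` is impossible.
-/

theorem IsPrincipalIdealRing.isJacobsonRing_of_jacobson_bot {R : Type*} [CommRing R] [IsDomain R]
    [IsPrincipalIdealRing R] (h : (⊥ : Ideal R).jacobson = ⊥) : IsJacobsonRing R := by
  refine isJacobsonRing_iff_prime_eq.mpr fun P hP => ?_
  by_cases hP0 : P = ⊥
  · rwa [hP0]
  · have := IsPrime.to_maximal_ideal hP0
    exact Ideal.jacobson_eq_self_of_isMaximal

theorem Int.jacobson_bot : (⊥ : Ideal ℤ).jacobson = ⊥ := by
  refine le_bot_iff.mp fun x hx => ?_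
  have h1 := Ideal.mem_jacobson_bot.mp hx 1
  have h2 := Ideal.mem_jacobson_bot.mp hx (-1)
  rw [Int.isUnit_iff] at h1 h2
  rw [Ideal.mem_bot]
  omega

instance Int.isJacobsonRing : IsJacobsonRing ℤ :=
  IsPrincipalIdealRing.isJacobsonRing_of_jacobson_bot Int.jacobson_bot

theorem finite_of_finiteType_int (K : Type*) [Field K] [Algebra.FiniteType ℤ K] : Finite K := by
  have : Module.Finite ℤ K := finite_of_finite_type_of_isJacobsonRing ℤ K
  by_cases hK : ringChar K = 0
  · have : CharZero K := (CharP.charP_zero_iff_charZero K).mp (hK ▸ ringChar.charP K)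
    have : Algebra.IsIntegral ℤ K := Algebra.IsIntegral.of_finite ℤ K
    exact absurd (isField_of_isIntegral_of_isField (algebraMap ℤ K).injective_int
      (Field.toIsField K)) Int.not_isField
  · refine Module.finite_of_fg_torsion K fun x =>
      ⟨⟨ringChar K, mem_nonZeroDivisors_of_ne_zero (by exact_mod_cast hK)⟩, ?_⟩
    simp

theorem Ideal.finite_quotient_of_finiteType_int {R : Type*} [CommRing R] [Algebra.FiniteType ℤ R]
    (m : Ideal R) [m.IsMaximal] : Finite (R ⧸ m) :=
  letI := Ideal.Quotient.field m
  @finite_of_finiteType_int (R ⧸ m) _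
    (.of_surjective (Ideal.Quotient.mkₐ ℤ m) Ideal.Quotient.mk_surjective)

theorem coprime_two_orderOf_of_conj_sq_eq_cube {G : Type*} [Group G] {x y : G}
    (hx : IsOfFinOrder x) (h : y * x ^ 2 * y⁻¹ = x ^ 3) : Nat.Coprime 2 (orderOf x) := by
  have hconj : orderOf (x ^ 2) = orderOf (x ^ 3) := SemiconjBy.orderOf_eq y (by
    rw [SemiconjBy, ← h]; group)
  rw [orderOf_pow' x two_ne_zero, orderOf_pow' x three_ne_zero] at hconj
  have hpos := hx.orderOf_pos
  rw [Nat.coprime_two_left, Nat.odd_iff]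
  by_contra heven
  have h2 : (orderOf x).gcd 2 = 2 := Nat.gcd_eq_right (by omega)
  rcases (Nat.dvd_prime Nat.prime_three).mp (Nat.gcd_dvd_right (orderOf x) 3) with h3 | h3 <;>
    rw [h2, h3] at hconj <;> omega

theorem commute_conj_of_conj_sq_eq_cube {G : Type*} [Group G] {x y : G}
    (hx : IsOfFinOrder x) (h : y * x ^ 2 * y⁻¹ = x ^ 3) : Commute (y * x * y⁻¹) x := by
  obtain ⟨k, hk⟩ := exists_pow_eq_self_of_coprime (coprime_two_orderOf_of_conj_sq_eq_cube hx h)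
  have : y * x * y⁻¹ = x ^ (3 * k) := by
    conv_lhs => rw [← hk]
    rw [← conj_pow, h, pow_mul]
  rw [this]
  exact (Commute.refl x).pow_left _

def BaumslagSolitarSystem {S : Type*} [Ring S] (x x' y y' z : S) : Prop :=
  x * x' = 1 ∧ y * y' = 1 ∧ y * x ^ 2 * y' = x ^ 3 ∧
    z * (y * x * y' * x' * y * x' * y' * x - 1) = 1

namespace BaumslagSolitarSystem

variable {S T : Type*} [Ring S] [Ring T] {x x' y y' z : S}

theorem map (f : S →+* T) (h : BaumslagSolitarSystem x x' y y' z) :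
    BaumslagSolitarSystem (f x) (f x') (f y) (f y') (f z) := by
  obtain ⟨h₁, h₂, h₃, h₄⟩ := h
  refine ⟨?_, ?_, ?_, ?_⟩
  · simpa only [map_mul, map_one] using congrArg f h₁
  · simpa only [map_mul, map_one] using congrArg f h₂
  · simpa only [map_mul, map_pow] using congrArg f h₃
  · simpa only [map_mul, map_sub, map_one] using congrArg f h₄

theorem of_map {f : S →+* T} (hf : Function.Injective f)
    (h : BaumslagSolitarSystem (f x) (f x') (f y) (f y') (f z)) :
    BaumslagSolitarSystem x x' y y' z := by
  obtain ⟨h₁, h₂, h₃, h₄⟩ := h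
  refine ⟨hf ?_, hf ?_, hf ?_, hf ?_⟩
  · simpa only [map_mul, map_one] using h₁
  · simpa only [map_mul, map_one] using h₂
  · simpa only [map_mul, map_pow] using h₃
  · simpa only [map_mul, map_sub, map_one] using h₄

theorem not_of_finite [Finite S] [Nontrivial S] : ¬ BaumslagSolitarSystem x x' y y' z := by
  rintro ⟨hx, hy, hr, hz⟩
  let X : Sˣ := ⟨x, x', hx, mul_eq_one_comm.mp hx⟩
  let Y : Sˣ := ⟨y, y', hy, mul_eq_one_comm.mp hy⟩
  have hcomm : Commute (Y * X * Y⁻¹) X :=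
    commute_conj_of_conj_sq_eq_cube (isOfFinOrder_of_finite X) (Units.ext hr)
  -- the word is the commutator `⁅y x y⁻¹, x⁻¹⁆`
  have hw : y * x * y' * x' * y * x' * y' * x = 1 := by
    have := congrArg Units.val (commutatorElement_eq_one_iff_commute.mpr hcomm.inv_right)
    simpa [commutatorElement_def, X, Y, mul_assoc] using this
  rw [hw, sub_self, mul_zero] at hz
  exact zero_ne_one hz

end BaumslagSolitarSystem

theorem Matrix.exists_finiteType_subalgebra_range_mapMatrix {A n : Type*} [CommRing A]
    [Fintype n] [DecidableEq n] {s : Set (Matrix n n A)} (hs : s.Finite) :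
    ∃ R : Subalgebra ℤ A, Algebra.FiniteType ℤ R ∧
      s ⊆ Set.range (R.val : R →+* A).mapMatrix := by
  let entries : Set A := ⋃ M ∈ s, Set.range fun p : n × n => M p.1 p.2
  refine ⟨Algebra.adjoin ℤ entries,
    .adjoin_of_finite (hs.biUnion fun M _ => Set.finite_range _), fun M hM => ?_⟩
  refine ⟨Matrix.of fun i j => ⟨M i j, Algebra.subset_adjoin ?_⟩, by ext; rfl⟩
  exact Set.mem_biUnion hM ⟨(i, j), rfl⟩

theorem stmt_11 {F : Type} [Field F] (c : ℕ) (hc : 1 ≤ c)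
    (x x' y y' z : Matrix (Fin c) (Fin c) F) :
    ¬ (x * x' = 1 ∧ y * y' = 1 ∧ y * x ^ 2 * y' = x ^ 3 ∧
        z * (y * x * y' * x' * y * x' * y' * x - 1) = 1) := by
  intro h
  obtain ⟨R, _, hR⟩ := Matrix.exists_finiteType_subalgebra_range_mapMatrix
    (Set.toFinite {x, x', y, y', z})
  obtain ⟨X, rfl⟩ := hR (show x ∈ _ by simp)
  obtain ⟨X', rfl⟩ := hR (show x' ∈ _ by simp)
  obtain ⟨Y, rfl⟩ := hR (show y ∈ _ by simp)
  obtain ⟨Y', rfl⟩ := hR (show y' ∈ _ by simp)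
  obtain ⟨Z, rfl⟩ := hR (show z ∈ _ by simp)
  have hRsol : BaumslagSolitarSystem X X' Y Y' Z :=
    .of_map (Matrix.map_injective Subtype.val_injective) h
  obtain ⟨m, hm⟩ := Ideal.exists_maximal R
  have := m.finite_quotient_of_finiteType_int
  have : Nonempty (Fin c) := ⟨⟨0, hc⟩⟩
  exact BaumslagSolitarSystem.not_of_finite (hRsol.map (Ideal.Quotient.mk m).mapMatrix)
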